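/- Assume P satisfies a margin condition with radius r_0. Let c ∈ B(M, B r_0/(4√2 M)), i.e., ‖c − c*‖ ≤ B r_0/(4√2 M) for some optimal codebook c* ∈ M. If c satisfies the centroid condition (each cell of a Voronoi partition of c has positive P-mass and c_i equals the conditional expectation of P on the i-th cell), then c ∈ M. -/

import Mathlib

open MeasureTheory Metric

noncomputable section

variable {H : Type*} [NormedAddCommGroup H] [InnerProductSpace ℝ H] [MeasurableSpace H]

/-- `qgamma k c x = min_j ‖x - c j‖²`. -/
def qgamma (k : ℕ) (c : Fin k → H) (x : H) : ℝ := ⨅ j : Fin k, ‖x - c j‖ ^ 2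

/-- distortion (risk) of a codebook. -/
def qrisk (k : ℕ) (P : Measure H) (c : Fin k → H) : ℝ := ∫ x, qgamma k c x ∂P

/-- the set of optimal codebooks. -/
def qopt (k : ℕ) (P : Measure H) : Set (Fin k → H) :=
  {c | ∀ c' : Fin k → H, qrisk k P c ≤ qrisk k P c'}

/-- the `i`-th (closed) Voronoi cell of the codebook `c`. -/
def vcell (k : ℕ) (c : Fin k → H) (i : Fin k) : Set H :=
  {x | ∀ j : Fin k, ‖x - c i‖ ≤ ‖x - c j‖}

/-- `B`, the minimal separation between code points of optimal codebooks. -/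
def qB (k : ℕ) (P : Measure H) : ℝ :=
  sInf {b | ∃ c ∈ qopt k P, ∃ i j : Fin k, i ≠ j ∧ b = ‖c i - c j‖}

/-- `p_min`, the minimal mass of a Voronoi cell of an optimal codebook. -/
def qpmin (k : ℕ) (P : Measure H) : ℝ :=
  sInf {p | ∃ c ∈ qopt k P, ∃ i : Fin k, p = (P (vcell k c i)).toReal}

/-- `N_{c*}`, the union of the boundaries between Voronoi cells. -/
def nbd (k : ℕ) (c : Fin k → H) : Set H :=
  ⋃ (i : Fin k) (j : Fin k) (_ : i ≠ j), vcell k c i ∩ vcell k c j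

/-- the weight function `p(t)`, the maximal mass of the closed `t`-neighborhood
of `N_{c*}` over optimal codebooks `c*`. -/
def pweight (k : ℕ) (P : Measure H) (t : ℝ) : ℝ :=
  sSup {p | ∃ c ∈ qopt k P, p = (P (cthickening t (nbd k c))).toReal}

/-- `P` is `M`-bounded: its support is contained in the closed ball `B(0,M)`. -/
def mbounded (P : Measure H) (M : ℝ) : Prop := P (closedBall (0 : H) M)ᶜ = 0

/-- the support of `P` contains more than `k` points. -/
def suppGT (P : Measure H) (k : ℕ) : Prop :=
  ∀ S : Finset H, S.card ≤ k → P ((S : Set H)ᶜ) ≠ 0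

/-- the margin condition with radius `r0`. -/
def margin (k : ℕ) (P : Measure H) (M r0 : ℝ) : Prop :=
  0 < r0 ∧ mbounded P M ∧
    ∀ t : ℝ, 0 ≤ t → t ≤ r0 → pweight k P t ≤ qB k P * qpmin k P * t / (128 * M ^ 2)

/-!
Project the optimal codebook `c*` radially onto `closedBall 0 M`; the result `b` is still optimal.
On the cell `W i` of `c` the centroid condition gives the bias-variance identity
`∫_{W i} ‖x - c i‖² = ∫_{W i} ‖x - b i‖² - P(W i) ‖c i - b i‖²`, so `R(c) - R(b)` is at most
`∑ᵢ ∫_{W i} (‖x - b i‖² - γ(b, x)) - ∑ᵢ P(W i) ‖c i - b i‖²`. With `d = ‖c - b‖`, a point of `W i`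
nearer to some `b j` has excess at most `4√2 M d` and lies within `t = 4√2 M d / B ≤ r₀` of `N_b`.
The margin condition bounds the mass `p(t)` of that neighbourhood, so the first sum is at most
`p_min d² / 4`, while every `W i` keeps mass at least `p_min - p(t) ≥ p_min / 4`.
-/

open scoped RealInnerProductSpace

lemma continuous_ciInf_of_finite {X α ι : Type*} [TopologicalSpace X]
    [ConditionallyCompleteLinearOrder α] [TopologicalSpace α] [OrderTopology α]
    [Fintype ι] [Nonempty ι] {f : ι → X → α} (hf : ∀ i, Continuous (f i)) :
    Continuous fun x => ⨅ i, f i x := by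
  simp_rw [← Finset.inf'_univ_eq_ciInf]
  exact Continuous.finset_inf'_apply _ fun i _ => hf i

section Voronoi

variable {E : Type*} [NormedAddCommGroup E] {k : ℕ}

lemma qgamma_le (c : Fin k → E) (x : E) (j : Fin k) : qgamma k c x ≤ ‖x - c j‖ ^ 2 :=
  ciInf_le ⟨0, by rintro _ ⟨l, rfl⟩; positivity⟩ j

lemma qgamma_nonneg (c : Fin k → E) (x : E) : 0 ≤ qgamma k c x :=
  Real.iInf_nonneg fun _ => by positivity

lemma mem_vcell_iff_sq {c : Fin k → E} {x : E} {i : Fin k} :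
    x ∈ vcell k c i ↔ ∀ j, ‖x - c i‖ ^ 2 ≤ ‖x - c j‖ ^ 2 :=
  forall_congr' fun _ => (sq_le_sq₀ (norm_nonneg _) (norm_nonneg _)).symm

lemma qgamma_eq_of_mem_vcell {c : Fin k → E} {x : E} {j : Fin k} (hx : x ∈ vcell k c j) :
    qgamma k c x = ‖x - c j‖ ^ 2 :=
  have : Nonempty (Fin k) := ⟨j⟩
  (qgamma_le c x j).antisymm (le_ciInf (mem_vcell_iff_sq.1 hx))

lemma exists_mem_vcell [NeZero k] (c : Fin k → E) (x : E) : ∃ j, x ∈ vcell k c j := by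
  obtain ⟨j, -, hj⟩ := Finset.univ.exists_min_image (fun l => ‖x - c l‖) Finset.univ_nonempty
  exact ⟨j, fun l => hj l (Finset.mem_univ l)⟩

lemma mem_nbd {c : Fin k → E} {x : E} {i j : Fin k} (hij : i ≠ j) (hi : x ∈ vcell k c i)
    (hj : x ∈ vcell k c j) : x ∈ nbd k c :=
  Set.mem_iUnion₂.2 ⟨i, j, Set.mem_iUnion.2 ⟨hij, hi, hj⟩⟩

lemma continuous_qgamma [NeZero k] (c : Fin k → E) : Continuous (qgamma k c) :=
  continuous_ciInf_of_finite fun _ => by fun_prop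

lemma mem_nbd_of_sq_eq_ciInf {c : Fin k → E} {y : E} {j : Fin k} [Nonempty {l // l ≠ j}]
    (hy : ‖y - c j‖ ^ 2 = ⨅ l : {l // l ≠ j}, ‖y - c l‖ ^ 2) : y ∈ nbd k c := by
  have hle : ∀ l : {l // l ≠ j}, ‖y - c j‖ ^ 2 ≤ ‖y - c l‖ ^ 2 := fun l =>
    hy ▸ ciInf_le ⟨0, by rintro _ ⟨_, rfl⟩; positivity⟩ l
  obtain ⟨l₀, hl₀⟩ := exists_eq_ciInf_of_finite (f := fun l : {l // l ≠ j} => ‖y - c l‖ ^ 2)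
  have hj : y ∈ vcell k c j := mem_vcell_iff_sq.2 fun m => by
    rcases eq_or_ne m j with rfl | hm
    · exact le_rfl
    · exact hle ⟨m, hm⟩
  refine mem_nbd l₀.2 (mem_vcell_iff_sq.2 fun m => ?_) hj
  rw [hl₀, ← hy]
  exact mem_vcell_iff_sq.1 hj m

lemma sq_norm_sub_sub_sq_norm_sub_le {a b : Fin k → E} {x : E} {i j : Fin k} {M : ℝ}
    (hx : x ∈ vcell k a i) (hxM : ‖x‖ ≤ M) (hbi : ‖b i‖ ≤ M) (hbj : ‖b j‖ ≤ M) :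
    ‖x - b i‖ ^ 2 - ‖x - b j‖ ^ 2 ≤ 4 * M * (‖a i - b i‖ + ‖a j - b j‖) := by
  have hgap : ‖x - b i‖ - ‖x - b j‖ ≤ ‖a i - b i‖ + ‖a j - b j‖ := by
    have := norm_sub_le_norm_sub_add_norm_sub x (a i) (b i)
    have := norm_sub_le_norm_sub_add_norm_sub x (b j) (a j)
    have := hx j
    rw [norm_sub_rev (b j)] at *
    linarith
  have hsum : ‖x - b i‖ + ‖x - b j‖ ≤ 4 * M := by
    linarith [norm_sub_le x (b i), norm_sub_le x (b j)]
  have hδ : 0 ≤ ‖a i - b i‖ + ‖a j - b j‖ := by positivity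
  have hpq : 0 ≤ ‖x - b i‖ + ‖x - b j‖ := by positivity
  nlinarith [mul_le_mul_of_nonneg_right hgap hpq, mul_le_mul_of_nonneg_left hsum hδ]

end Voronoi

section Geometry

variable {E : Type*} [NormedAddCommGroup E] [InnerProductSpace ℝ E] {k : ℕ}

/-- Walk from `x` in the direction of `c i - c j`: the bisector of `c i` and `c j` is reached after
the distance `Δ / (2 ‖c i - c j‖)`, and by the intermediate value theorem the walk meets another
cell of `c` before leaving `V_j`. -/
lemma exists_mem_nbd_mul_dist_le {c : Fin k → E} {x : E} {i j : Fin k} (hij : i ≠ j)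
    (hx : x ∈ vcell k c j) :
    ∃ z ∈ nbd k c, 2 * ‖c i - c j‖ * dist x z ≤ ‖x - c i‖ ^ 2 - ‖x - c j‖ ^ 2 := by
  have hΔ : 0 ≤ ‖x - c i‖ ^ 2 - ‖x - c j‖ ^ 2 := sub_nonneg.2 (mem_vcell_iff_sq.1 hx i)
  rcases eq_or_ne (c i) (c j) with hc | hc
  · refine ⟨x, mem_nbd hij (fun m => hc ▸ hx m) hx, by simp [hc]⟩
  set D := ‖c i - c j‖
  have hD : 0 < D := norm_pos_iff.2 (sub_ne_zero.2 hc)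
  set u := D⁻¹ • (c i - c j)
  have hu : ‖u‖ = 1 := by
    rw [norm_smul, Real.norm_of_nonneg (inv_nonneg.2 hD.le), inv_mul_cancel₀ hD.ne']
  have hexpand : ∀ (τ : ℝ) (a : E),
      ‖x + τ • u - a‖ ^ 2 = ‖x - a‖ ^ 2 + 2 * τ * ⟪x - a, u⟫ + τ ^ 2 := by
    intro τ a
    rw [show x + τ • u - a = (x - a) + τ • u by abel, norm_add_sq_real, real_inner_smul_right,
      norm_smul, hu, Real.norm_eq_abs, mul_one, sq_abs]
    ring
  have hinner : ⟪x - c j, u⟫ - ⟪x - c i, u⟫ = D := by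
    rw [← inner_sub_left, show x - c j - (x - c i) = c i - c j by abel, real_inner_smul_right,
      real_inner_self_eq_norm_sq]
    change D⁻¹ * D ^ 2 = D
    field_simp
  have : Nonempty {l // l ≠ j} := ⟨⟨i, hij⟩⟩
  set f : ℝ → ℝ := fun τ => ‖x + τ • u - c j‖ ^ 2 - ⨅ l : {l // l ≠ j}, ‖x + τ • u - c l‖ ^ 2
  have hf : Continuous f :=
    Continuous.sub (by fun_prop) (continuous_ciInf_of_finite fun _ => by fun_prop)
  set τ₁ := (‖x - c i‖ ^ 2 - ‖x - c j‖ ^ 2) / (2 * D)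
  have hτ₁ : 0 ≤ τ₁ := div_nonneg hΔ (by positivity)
  have h2D : τ₁ * (2 * D) = ‖x - c i‖ ^ 2 - ‖x - c j‖ ^ 2 := div_mul_cancel₀ _ (by positivity)
  clear_value τ₁
  have hf₀ : f 0 ≤ 0 := by
    simp only [f, zero_smul, add_zero, sub_nonpos]
    exact le_ciInf fun l => mem_vcell_iff_sq.1 hx l
  have hf₁ : 0 ≤ f τ₁ := by
    have hi : ⨅ l : {l // l ≠ j}, ‖x + τ₁ • u - c l‖ ^ 2 ≤ ‖x + τ₁ • u - c i‖ ^ 2 :=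
      ciInf_le ⟨0, by rintro _ ⟨_, rfl⟩; positivity⟩ (⟨i, hij⟩ : {l // l ≠ j})
    simp only [f, sub_nonneg]
    refine le_trans hi (le_of_eq ?_)
    rw [hexpand, hexpand]
    linear_combination -h2D - 2 * τ₁ * hinner
  obtain ⟨τ₀, ⟨hτ₀, hτ₀₁⟩, hfτ₀⟩ :=
    intermediate_value_Icc hτ₁ hf.continuousOn ⟨hf₀, hf₁⟩
  refine ⟨x + τ₀ • u, mem_nbd_of_sq_eq_ciInf (sub_eq_zero.1 hfτ₀), ?_⟩
  rw [dist_eq_norm, sub_add_cancel_left, norm_neg, norm_smul, hu, mul_one, Real.norm_of_nonneg hτ₀]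
  calc 2 * D * τ₀ ≤ 2 * D * τ₁ := by gcongr
    _ = _ := by rw [mul_comm, h2D]

lemma mem_cthickening_nbd_of_sq_sub_le {c : Fin k → E} {x : E} {i j : Fin k} {t : ℝ}
    (hij : i ≠ j) (hc : c i ≠ c j) (hx : x ∈ vcell k c j)
    (hΔ : ‖x - c i‖ ^ 2 - ‖x - c j‖ ^ 2 ≤ t * ‖c i - c j‖) : x ∈ cthickening t (nbd k c) := by
  obtain ⟨z, hz, hxz⟩ := exists_mem_nbd_mul_dist_le hij hx
  refine mem_cthickening_of_dist_le x z t _ hz ?_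
  have hD : 0 < ‖c i - c j‖ := norm_pos_iff.2 (sub_ne_zero.2 hc)
  nlinarith [dist_nonneg (x := x) (y := z)]

lemma sq_sub_le_and_mem_cthickening_nbd {a b : Fin k → E} {x : E} {i j : Fin k} {M s B : ℝ}
    (hij : i ≠ j) (hB : 0 < B) (hBij : B ≤ ‖b i - b j‖) (hxa : x ∈ vcell k a i)
    (hxb : x ∈ vcell k b j) (hxM : ‖x‖ ≤ M) (hbM : ∀ l, ‖b l‖ ≤ M)
    (hs : ‖a i - b i‖ + ‖a j - b j‖ ≤ s) :
    ‖x - b i‖ ^ 2 - ‖x - b j‖ ^ 2 ≤ 4 * M * s ∧ x ∈ cthickening (4 * M * s / B) (nbd k b) := by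
  have hM : 0 ≤ M := (norm_nonneg x).trans hxM
  have hs₀ : 0 ≤ s := (by positivity : 0 ≤ ‖a i - b i‖ + ‖a j - b j‖).trans hs
  have hΔ := (sq_norm_sub_sub_sq_norm_sub_le hxa hxM (hbM i) (hbM j)).trans
    (mul_le_mul_of_nonneg_left hs (by positivity))
  refine ⟨hΔ, mem_cthickening_nbd_of_sq_sub_le hij
    (sub_ne_zero.1 (norm_pos_iff.1 (hB.trans_le hBij))) hxb (hΔ.trans ?_)⟩
  rw [div_mul_eq_mul_div, le_div_iff₀ hB]
  exact mul_le_mul_of_nonneg_left hBij (by positivity)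

def projBall (M : ℝ) (y : E) : E := if ‖y‖ ≤ M then y else (M / ‖y‖) • y

lemma norm_projBall_le {M : ℝ} (hM : 0 ≤ M) (y : E) : ‖projBall M y‖ ≤ M := by
  unfold projBall
  split_ifs with hy
  · exact hy
  · have hy₀ : 0 < ‖y‖ := hM.trans_lt (not_le.1 hy)
    rw [norm_smul, Real.norm_of_nonneg (by positivity), div_mul_cancel₀ _ hy₀.ne']

lemma norm_sub_projBall_le {M : ℝ} {x : E} (hx : ‖x‖ ≤ M) (y : E) :
    ‖x - projBall M y‖ ≤ ‖x - y‖ := by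
  unfold projBall
  split_ifs with hy
  · exact le_rfl
  replace hy := not_le.1 hy
  have hy₀ : 0 < ‖y‖ := (norm_nonneg x).trans_lt (hx.trans_lt hy)
  set r := M / ‖y‖
  have hr₀ : 0 ≤ r := div_nonneg ((norm_nonneg x).trans hx) hy₀.le
  have hr₁ : r ≤ 1 := (div_le_one hy₀).2 hy.le
  have hry : r * ‖y‖ = M := div_mul_cancel₀ _ hy₀.ne'
  rw [← sq_le_sq₀ (norm_nonneg _) (norm_nonneg _), norm_sub_sq_real, norm_sub_sq_real,
    real_inner_smul_right, norm_smul, Real.norm_of_nonneg hr₀]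
  -- `⟪x, y⟫ ≤ M ‖y‖ = r ‖y‖²` and `2 r ≤ 1 + r`
  have hxy : ⟪x, y⟫ ≤ r * ‖y‖ ^ 2 := by
    nlinarith [real_inner_le_norm x y]
  nlinarith [mul_nonneg (sub_nonneg.2 hr₁) hr₀]

end Geometry

section Bounded

variable {E : Type*} [NormedAddCommGroup E] [MeasurableSpace E] {k : ℕ} {P : Measure E} {M : ℝ}

lemma ae_norm_le_of_mbounded (hP : mbounded P M) : ∀ᵐ x ∂P, ‖x‖ ≤ M :=
  ae_iff.2 <| measure_mono_null (fun x hx => by simpa using hx) hP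

variable [BorelSpace E] [IsFiniteMeasure P]

lemma integrable_id_of_mbounded [SecondCountableTopology E] (hP : mbounded P M) :
    Integrable (fun x : E => x) P :=
  (integrable_const M).mono' aestronglyMeasurable_id (ae_norm_le_of_mbounded hP)

lemma integrable_norm_sub_sq_of_mbounded (hP : mbounded P M) (a : E) :
    Integrable (fun x => ‖x - a‖ ^ 2) P := by
  refine (integrable_const ((M + ‖a‖) ^ 2)).mono'
    (by fun_prop : Continuous fun x : E => ‖x - a‖ ^ 2).aestronglyMeasurable ?_
  filter_upwards [ae_norm_le_of_mbounded hP] with x hx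
  rw [Real.norm_of_nonneg (by positivity)]
  gcongr
  exact (norm_sub_le x a).trans (by linarith)

lemma integrable_qgamma_of_mbounded [NeZero k] (hP : mbounded P M) (c : Fin k → E) :
    Integrable (qgamma k c) P :=
  (integrable_norm_sub_sq_of_mbounded hP (c 0)).mono' (continuous_qgamma c).aestronglyMeasurable
    (ae_of_all _ fun x => by rw [Real.norm_of_nonneg (qgamma_nonneg c x)]; exact qgamma_le c x 0)

lemma projBall_mem_qopt [InnerProductSpace ℝ E] [NeZero k] (hP : mbounded P M) {c : Fin k → E}
    (hc : c ∈ qopt k P) : (fun i => projBall M (c i)) ∈ qopt k P := fun c' => by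
  refine le_trans (integral_mono_ae (integrable_qgamma_of_mbounded hP _)
    (integrable_qgamma_of_mbounded hP _) ?_) (hc c')
  filter_upwards [ae_norm_le_of_mbounded hP] with x hx
  exact le_ciInf fun j =>
    (qgamma_le _ x j).trans (by gcongr; exact norm_sub_projBall_le hx (c j))

end Bounded

section Optimal

variable {E : Type*} [NormedAddCommGroup E] [MeasurableSpace E] {k : ℕ} {P : Measure E}

lemma qB_nonneg : 0 ≤ qB k P :=
  Real.sInf_nonneg <| by rintro _ ⟨_, _, _, _, _, rfl⟩; positivity

lemma qB_le_norm_sub {c : Fin k → E} (hc : c ∈ qopt k P) {i j : Fin k} (hij : i ≠ j) :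
    qB k P ≤ ‖c i - c j‖ :=
  csInf_le ⟨0, by rintro _ ⟨_, _, _, _, _, rfl⟩; positivity⟩ ⟨c, hc, i, j, hij, rfl⟩

lemma qB_le_two_mul (hk : 2 ≤ k) {c : Fin k → E} (hc : c ∈ qopt k P) {M : ℝ}
    (hcM : ∀ i, ‖c i‖ ≤ M) : qB k P ≤ 2 * M :=
  (qB_le_norm_sub hc (i := ⟨0, by omega⟩) (j := ⟨1, by omega⟩) (by simp [Fin.ext_iff])).trans
    ((norm_sub_le _ _).trans (by linarith [hcM ⟨0, by omega⟩, hcM ⟨1, by omega⟩]))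

lemma qpmin_nonneg : 0 ≤ qpmin k P :=
  Real.sInf_nonneg <| by rintro _ ⟨_, _, _, rfl⟩; positivity

lemma qpmin_le {c : Fin k → E} (hc : c ∈ qopt k P) (i : Fin k) :
    qpmin k P ≤ P.real (vcell k c i) :=
  csInf_le ⟨0, by rintro _ ⟨_, _, _, rfl⟩; positivity⟩ ⟨c, hc, i, rfl⟩

lemma measure_cthickening_nbd_le_pweight [IsFiniteMeasure P] {c : Fin k → E} (hc : c ∈ qopt k P)
    (t : ℝ) : P.real (cthickening t (nbd k c)) ≤ pweight k P t :=
  le_csSup ⟨P.real Set.univ, by rintro _ ⟨_, _, rfl⟩; exact measureReal_mono (Set.subset_univ _)⟩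
    ⟨c, hc, rfl⟩

end Optimal

lemma add_le_sqrt_two_mul_sqrt_sum_sq {ι : Type*} [Fintype ι] (f : ι → ℝ) {i j : ι} (hij : i ≠ j) :
    f i + f j ≤ √2 * √(∑ l, f l ^ 2) := by
  rw [← Real.sqrt_mul zero_le_two]
  refine Real.le_sqrt_of_sq_le ?_
  have := Finset.add_le_sum (f := fun l => f l ^ 2) (fun _ _ => sq_nonneg _)
    (Finset.mem_univ i) (Finset.mem_univ j) hij
  nlinarith [sq_nonneg (f i - f j)]

section Centroid

variable {α E : Type*} [MeasurableSpace α] [NormedAddCommGroup E] [InnerProductSpace ℝ E]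
  [CompleteSpace E] {μ : Measure α} [IsFiniteMeasure μ]

lemma integral_norm_sub_sq_eq_add {f : α → E} {a b : E} (hf : Integrable f μ)
    (hfb : Integrable (fun x => ‖f x - b‖ ^ 2) μ) (hb : ∫ x, f x ∂μ = μ.real Set.univ • b) :
    ∫ x, ‖f x - a‖ ^ 2 ∂μ = ∫ x, ‖f x - b‖ ^ 2 ∂μ + μ.real Set.univ * ‖b - a‖ ^ 2 := by
  have hf' : Integrable (fun x => f x - b) μ := hf.sub (integrable_const b)
  have hcross : Integrable (fun x => 2 * ⟪f x - b, b - a⟫) μ :=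
    (hf'.inner_const (b - a)).const_mul 2
  have hmean : ∫ x, (f x - b) ∂μ = 0 := by
    rw [integral_sub hf (integrable_const b), hb, integral_const, sub_self]
  have hcross_zero : ∫ x, ⟪f x - b, b - a⟫ ∂μ = 0 :=
    calc ∫ x, ⟪f x - b, b - a⟫ ∂μ = ∫ x, ⟪b - a, f x - b⟫ ∂μ :=
          integral_congr_ae (ae_of_all _ fun _ => real_inner_comm _ _)
      _ = 0 := by rw [integral_inner hf', hmean, inner_zero_right]
  have hrest : Integrable (fun x => 2 * ⟪f x - b, b - a⟫ + ‖b - a‖ ^ 2) μ :=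
    hcross.add (integrable_const _)
  calc ∫ x, ‖f x - a‖ ^ 2 ∂μ
      = ∫ x, (‖f x - b‖ ^ 2 + (2 * ⟪f x - b, b - a⟫ + ‖b - a‖ ^ 2)) ∂μ := by
        congr with x
        rw [← sub_add_sub_cancel (f x) b a, norm_add_sq_real]
        ring
    _ = _ := by
        rw [integral_add hfb hrest,
          integral_add hcross (integrable_const _), integral_const_mul, hcross_zero,
          integral_const, smul_eq_mul]
        ring

end Centroid

section Quantizer

variable {E : Type*} [NormedAddCommGroup E] [InnerProductSpace ℝ E] [MeasurableSpace E] {k : ℕ}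
  {P : Measure E} {M : ℝ}

/-- Of the condition `closure (W i) = V_i(c)` on a Voronoi partition only `W i ⊆ V_i(c)` is kept. -/
structure IsCentroidalVoronoiPartition (k : ℕ) (P : Measure E) (c : Fin k → E)
    (W : Fin k → Set E) : Prop where
  measurableSet : ∀ i, MeasurableSet (W i)
  pairwise_disjoint : Pairwise (Function.onFun Disjoint W)
  iUnion_eq : ⋃ i, W i = Set.univ
  subset_vcell : ∀ i, W i ⊆ vcell k c i
  measure_ne_zero : ∀ i, P (W i) ≠ 0
  setIntegral_eq : ∀ i, ∫ x in W i, x ∂P = P.real (W i) • c i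

namespace IsCentroidalVoronoiPartition

variable {c : Fin k → E} {W : Fin k → Set E} [IsFiniteMeasure P]

lemma norm_le (hW : IsCentroidalVoronoiPartition k P c W) (hP : mbounded P M) (i : Fin k) :
    ‖c i‖ ≤ M := by
  have hpos : 0 < P.real (W i) :=
    ENNReal.toReal_pos (hW.measure_ne_zero i) (measure_ne_top P _)
  have h := norm_setIntegral_le_of_norm_le_const_ae (measure_lt_top P (W i))
    (ae_restrict_of_ae (ae_norm_le_of_mbounded hP)) (f := fun x => x)
  rw [hW.setIntegral_eq i, norm_smul, Real.norm_of_nonneg hpos.le, mul_comm M] at h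
  exact le_of_mul_le_mul_left h hpos

variable [BorelSpace E] [SecondCountableTopology E] [CompleteSpace E]

lemma qrisk_sub_qrisk_le [NeZero k] (hW : IsCentroidalVoronoiPartition k P c W)
    (hP : mbounded P M) (b : Fin k → E) {T : Set E} (hT : MeasurableSet T) (ε : ℝ)
    (hexcess : ∀ i, ∀ x ∈ W i, ‖x‖ ≤ M →
      ‖x - b i‖ ^ 2 - qgamma k b x ≤ T.indicator (fun _ => ε) x) :
    qrisk k P c - qrisk k P b ≤ ε * P.real T - ∑ i, P.real (W i) * ‖c i - b i‖ ^ 2 := by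
  have hsum : ∀ f : E → ℝ, Integrable f P → ∫ x, f x ∂P = ∑ i, ∫ x in W i, f x ∂P := fun f hf => by
    rw [← integral_iUnion_fintype hW.measurableSet hW.pairwise_disjoint fun i => hf.integrableOn,
      hW.iUnion_eq, setIntegral_univ]
  have hcell : ∀ i, ∫ x in W i, qgamma k c x ∂P - ∫ x in W i, qgamma k b x ∂P ≤
      ∫ x in W i, T.indicator (fun _ => ε) x ∂P - P.real (W i) * ‖c i - b i‖ ^ 2 := by
    intro i
    have hc : ∫ x in W i, qgamma k c x ∂P ≤ ∫ x in W i, ‖x - c i‖ ^ 2 ∂P :=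
      setIntegral_mono_on (integrable_qgamma_of_mbounded hP c).integrableOn
        (integrable_norm_sub_sq_of_mbounded hP _).integrableOn (hW.measurableSet i)
        fun x _ => qgamma_le c x i
    have hbias := integral_norm_sub_sq_eq_add (μ := P.restrict (W i)) (a := b i)
      (integrable_id_of_mbounded hP).integrableOn
      (integrable_norm_sub_sq_of_mbounded hP (c i)).integrableOn
      (by rw [measureReal_restrict_apply_univ]; exact hW.setIntegral_eq i)
    rw [measureReal_restrict_apply_univ] at hbias
    have hb : ∫ x in W i, ‖x - b i‖ ^ 2 ∂P - ∫ x in W i, qgamma k b x ∂P ≤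
        ∫ x in W i, T.indicator (fun _ => ε) x ∂P := by
      rw [← integral_sub (integrable_norm_sub_sq_of_mbounded hP _).integrableOn
        (integrable_qgamma_of_mbounded hP b).integrableOn]
      refine integral_mono_ae (((integrable_norm_sub_sq_of_mbounded hP _).sub
        (integrable_qgamma_of_mbounded hP b)).integrableOn)
        ((integrable_const ε).indicator hT).integrableOn ?_
      filter_upwards [ae_restrict_mem (hW.measurableSet i),
        ae_restrict_of_ae (ae_norm_le_of_mbounded hP)] with x hxW hxM
      exact hexcess i x hxW hxM
    linarith
  rw [qrisk, qrisk, hsum _ (integrable_qgamma_of_mbounded hP c),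
    hsum _ (integrable_qgamma_of_mbounded hP b), ← Finset.sum_sub_distrib,
    show ε * P.real T = ∫ x, T.indicator (fun _ => ε) x ∂P by
      rw [integral_indicator_const _ hT, smul_eq_mul, mul_comm],
    hsum _ ((integrable_const ε).indicator hT), ← Finset.sum_sub_distrib]
  exact Finset.sum_le_sum fun i _ => hcell i

lemma qrisk_sub_qrisk_le_of_misassigned [NeZero k] (hW : IsCentroidalVoronoiPartition k P c W)
    (hP : mbounded P M) {b : Fin k → E} (hb : b ∈ qopt k P) {T : Set E} (hT : MeasurableSet T)
    {ε : ℝ} (hε : 0 ≤ ε)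
    (hmis : ∀ i j, i ≠ j → ∀ x ∈ W i, ‖x‖ ≤ M → x ∈ vcell k b j →
      ‖x - b i‖ ^ 2 - ‖x - b j‖ ^ 2 ≤ ε ∧ x ∈ T) :
    qrisk k P c - qrisk k P b ≤ ε * P.real T - (qpmin k P - P.real T) * ∑ i, ‖c i - b i‖ ^ 2 := by
  have hexcess : ∀ i, ∀ x ∈ W i, ‖x‖ ≤ M →
      ‖x - b i‖ ^ 2 - qgamma k b x ≤ T.indicator (fun _ => ε) x := by
    intro i x hxW hxM
    obtain ⟨j, hj⟩ := exists_mem_vcell b x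
    rw [qgamma_eq_of_mem_vcell hj]
    rcases eq_or_ne i j with rfl | hij
    · rw [sub_self]
      exact Set.indicator_nonneg (fun _ _ => hε) x
    · obtain ⟨hΔ, hxT⟩ := hmis i j hij x hxW hxM hj
      rwa [Set.indicator_of_mem hxT]
  have hmass : ∀ i, qpmin k P - P.real T ≤ P.real (W i) := by
    intro i
    have hcover : vcell k b i ≤ᵐ[P] (W i ∪ T : Set E) := by
      filter_upwards [ae_norm_le_of_mbounded hP] with x hxM hx
      obtain ⟨l, hl⟩ := Set.mem_iUnion.1 (hW.iUnion_eq ▸ Set.mem_univ x)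
      rcases eq_or_ne l i with rfl | hli
      · exact Or.inl hl
      · exact Or.inr (hmis l i hli x hl hxM hx).2
    have : P.real (vcell k b i) ≤ P.real (W i ∪ T) :=
      ENNReal.toReal_mono (measure_ne_top P _) (measure_mono_ae hcover)
    linarith [qpmin_le hb i, measureReal_union_le (μ := P) (W i) T]
  refine (hW.qrisk_sub_qrisk_le hP b hT ε hexcess).trans (sub_le_sub_left ?_ _)
  rw [Finset.mul_sum]
  gcongr with i
  exact hmass i

end IsCentroidalVoronoiPartition

end Quantizer

section Margin

variable {E : Type*} [NormedAddCommGroup E] [InnerProductSpace ℝ E] [MeasurableSpace E] {k : ℕ}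
  [OpensMeasurableSpace E] {P : Measure E} [IsProbabilityMeasure P] {M r0 : ℝ}

/-- Some point of `N_b` lies within `2M` of the origin, so `p(3M) = 1`; the margin condition
at `t = 3M` would then force `1 ≤ B p_min / (128 M) · 3 ≤ 6 / 128`. -/
lemma margin_radius_lt (hk : 2 ≤ k) (hM : 0 < M) (hmargin : margin k P M r0) {b : Fin k → E}
    (hb : b ∈ qopt k P) (hbM : ∀ i, ‖b i‖ ≤ M) (hB : 0 < qB k P) : r0 < 3 * M := by
  obtain ⟨-, hP, hpweight⟩ := hmargin
  by_contra! hr0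
  set i₀ : Fin k := ⟨0, by omega⟩
  set i₁ : Fin k := ⟨1, by omega⟩
  have hi : i₀ ≠ i₁ := by simp [i₀, i₁, Fin.ext_iff]
  set D := ‖b i₀ - b i₁‖
  have hD : 0 < D := hB.trans_le (qB_le_norm_sub hb hi)
  have hD₂ : D ≤ 2 * M := (norm_sub_le _ _).trans (by linarith [hbM i₀, hbM i₁])
  have hb₁ : b i₁ ∈ vcell k b i₁ := fun l => by rw [sub_self, norm_zero]; exact norm_nonneg _
  obtain ⟨z, hz, hdist⟩ := exists_mem_nbd_mul_dist_le hi hb₁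
  rw [sub_self, norm_zero, norm_sub_rev (b i₁), zero_pow two_ne_zero, sub_zero] at hdist
  have hzM : dist (b i₁) z ≤ M := by nlinarith [dist_nonneg (x := b i₁) (y := z)]
  have hball : closedBall (0 : E) M ⊆ cthickening (3 * M) (nbd k b) := fun x hx => by
    refine mem_cthickening_of_dist_le x z _ _ hz ?_
    have := dist_triangle4 x 0 (b i₁) z
    rw [mem_closedBall] at hx
    rw [dist_zero_left] at this
    linarith [hbM i₁]
  have hone : 1 ≤ pweight k P (3 * M) :=
    calc (1 : ℝ) = P.real (closedBall 0 M) := by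
          rw [measureReal_def, (prob_compl_eq_zero_iff measurableSet_closedBall).1 hP,
            ENNReal.toReal_one]
      _ ≤ P.real (cthickening (3 * M) (nbd k b)) := measureReal_mono hball
      _ ≤ pweight k P (3 * M) := measure_cthickening_nbd_le_pweight hb _
  have hmass := hone.trans (hpweight _ (by positivity) hr0)
  have hpmin : qpmin k P ≤ 1 := (qpmin_le hb i₀).trans measureReal_le_one
  rw [le_div_iff₀ (by positivity)] at hmass
  nlinarith [mul_le_mul (qB_le_two_mul hk hb hbM) hpmin qpmin_nonneg (by positivity)]


variable [BorelSpace E] [SecondCountableTopology E] [CompleteSpace E]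

theorem IsCentroidalVoronoiPartition.qrisk_le (hk : 2 ≤ k) (hM : 0 < M)
    (hmargin : margin k P M r0) {b c : Fin k → E} {W : Fin k → Set E} (hb : b ∈ qopt k P)
    (hbM : ∀ i, ‖b i‖ ≤ M) (hW : IsCentroidalVoronoiPartition k P c W) (hB : 0 < qB k P)
    (hclose : √(∑ i, ‖c i - b i‖ ^ 2) ≤ qB k P * r0 / (4 * √2 * M)) :
    qrisk k P c ≤ qrisk k P b := by
  have : NeZero k := ⟨by omega⟩
  have hr0 := margin_radius_lt hk hM hmargin hb hbM hB
  obtain ⟨-, hP, hpweight⟩ := hmargin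
  set B := qB k P
  set pm := qpmin k P
  set d := √(∑ i, ‖c i - b i‖ ^ 2)
  set ε := 4 * M * (√2 * d)
  set t := ε / B
  have htB : t * B = ε := div_mul_cancel₀ _ hB.ne'
  have ht : t ≤ r0 := by
    rw [le_div_iff₀ (by positivity)] at hclose
    rw [div_le_iff₀ hB]
    linarith
  have ht₀ : 0 ≤ t := div_nonneg (by positivity) hB.le
  set T := cthickening t (nbd k b)
  have hrisk : qrisk k P c - qrisk k P b ≤ ε * P.real T - (pm - P.real T) * d ^ 2 := by
    rw [Real.sq_sqrt (by positivity)]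
    exact hW.qrisk_sub_qrisk_le_of_misassigned hP hb isClosed_cthickening.measurableSet
      (by positivity) fun i j hij x hxW hxM hxb =>
        sq_sub_le_and_mem_cthickening_nbd hij hB (qB_le_norm_sub hb hij) (hW.subset_vcell i hxW)
          hxb hxM hbM (add_le_sqrt_two_mul_sqrt_sum_sq (fun l => ‖c l - b l‖) hij)
  have he : P.real T * (128 * M ^ 2) ≤ B * pm * t :=
    (le_div_iff₀ (by positivity)).1 ((measure_cthickening_nbd_le_pweight hb t).trans
      (hpweight t (by positivity) ht))
  have hε : ε ^ 2 = 32 * M ^ 2 * d ^ 2 := by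
    simp only [ε, mul_pow, Real.sq_sqrt zero_le_two]
    ring
  have hM₂ : 0 < 128 * M ^ 2 := by positivity
  have hcross : ε * P.real T ≤ pm * d ^ 2 / 4 := by
    refine le_of_mul_le_mul_right ?_ hM₂
    calc ε * P.real T * (128 * M ^ 2) ≤ ε * (B * pm * t) := by
          rw [mul_assoc]
          exact mul_le_mul_of_nonneg_left he (by positivity)
      _ = pm * ε ^ 2 := by rw [← htB]; ring
      _ = pm * d ^ 2 / 4 * (128 * M ^ 2) := by rw [hε]; ring
  have hsmall : P.real T ≤ 3 / 4 * pm := by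
    refine le_of_mul_le_mul_right (he.trans ?_) hM₂
    have hBt : B * t ≤ 2 * M * (3 * M) :=
      mul_le_mul (qB_le_two_mul hk hb hbM) (ht.trans hr0.le) ht₀ (by positivity)
    nlinarith [qpmin_nonneg (k := k) (P := P)]
  nlinarith [mul_le_mul_of_nonneg_right hsmall (sq_nonneg d)]

end Margin

theorem stmt11_general [BorelSpace H] [SecondCountableTopology H] [CompleteSpace H]
    (k : ℕ) (hk : 2 ≤ k) (P : Measure H) [IsProbabilityMeasure P]
    (M : ℝ) (hM : 0 < M)
    (r0 : ℝ) (hmargin : margin k P M r0)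
    (c : Fin k → H)
    (hclose : ∃ cs ∈ qopt k P,
      Real.sqrt (∑ i, ‖c i - cs i‖ ^ 2) ≤ qB k P * r0 / (4 * Real.sqrt 2 * M))
    -- the centroid condition for a Voronoi partition of `c`
    (hcentroid : ∃ W : Fin k → Set H,
      (∀ i, MeasurableSet (W i)) ∧
      Pairwise (Function.onFun Disjoint W) ∧
      (⋃ i, W i) = Set.univ ∧
      (∀ i, closure (W i) = vcell k c i) ∧
      (∀ i, P (W i) ≠ 0) ∧
      (∀ i, c i = (P (W i)).toReal⁻¹ • ∫ x in W i, x ∂P)) :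
    c ∈ qopt k P := by
  obtain ⟨cs, hcs, hclose⟩ := hclose
  obtain ⟨W, hWm, hWd, hWu, hWcl, hW0, hWc⟩ := hcentroid
  have : NeZero k := ⟨by omega⟩
  have hW : IsCentroidalVoronoiPartition k P c W :=
    { measurableSet := hWm
      pairwise_disjoint := hWd
      iUnion_eq := hWu
      subset_vcell := fun i => hWcl i ▸ subset_closure
      measure_ne_zero := hW0
      setIntegral_eq := fun i => by
        rw [hWc i, smul_smul, measureReal_def,
          mul_inv_cancel₀ (ENNReal.toReal_ne_zero.2 ⟨hW0 i, measure_ne_top P _⟩), one_smul] }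
  have hP : mbounded P M := hmargin.2.1
  rcases (qB_nonneg (k := k) (P := P)).eq_or_lt with hB | hB
  · have hdist : dist (WithLp.toLp 2 c) (WithLp.toLp 2 cs) ≤ 0 := by
      rw [PiLp.dist_eq_of_L2]
      simpa only [PiLp.toLp_apply, dist_eq_norm, ← hB, zero_mul, zero_div] using hclose
    exact WithLp.toLp_injective 2 (dist_le_zero.1 hdist) ▸ hcs
  have hb := projBall_mem_qopt hP hcs
  refine fun c' => le_trans ?_ (hb c')
  refine hW.qrisk_le hk hM hmargin hb (fun i => norm_projBall_le hM.le _) hB (hclose.trans' ?_)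
  gcongr with i
  exact norm_sub_projBall_le (hW.norm_le hP i) _

/-- Lemma 4.3: a codebook close to the set of optimal codebooks which satisfies
the centroid condition is an optimal codebook. -/
theorem stmt11 [BorelSpace H] [SecondCountableTopology H] [CompleteSpace H]
    (k : ℕ) (hk : 2 ≤ k) (P : Measure H) [IsProbabilityMeasure P]
    (M : ℝ) (hM : 0 < M) (hsupp : suppGT P k) (hne : (qopt k P).Nonempty)
    (r0 : ℝ) (hmargin : margin k P M r0)
    (c : Fin k → H)
    (hclose : ∃ cs ∈ qopt k P,
      Real.sqrt (∑ i, ‖c i - cs i‖ ^ 2) ≤ qB k P * r0 / (4 * Real.sqrt 2 * M))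
    -- the centroid condition for a Voronoi partition of `c`
    (hcentroid : ∃ W : Fin k → Set H,
      (∀ i, MeasurableSet (W i)) ∧
      Pairwise (Function.onFun Disjoint W) ∧
      (⋃ i, W i) = Set.univ ∧
      (∀ i, closure (W i) = vcell k c i) ∧
      (∀ i, P (W i) ≠ 0) ∧
      (∀ i, c i = (P (W i)).toReal⁻¹ • ∫ x in W i, x ∂P)) :
    c ∈ qopt k P :=
  stmt11_general k hk P M hM r0 hmargin c hclose hcentroid
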